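/- arXiv:2409.03742 — 2 statements merged into one kernel-verified Lean document; each statement's English description precedes it below -/
import Mathlib

section
/- A simplicial map f : Y → X of simplicial sets is ikeo if and only if for each n ≥ 0 the square with horizontal maps (ρ_1,…,ρ_n)* : Y_n → Y_1×⋯×Y_1 and (ρ_1,…,ρ_n)* : X_n → X_1×⋯×X_1 and vertical maps induced by f is a pullback of sets. -/
open CategoryTheory Opposite

namespace Crapo

/-- A commuting square of sets
`A → B`, `A → C`, `B → D`, `C → D` is a pullback (element-wise formulation). -/
def IsPullbackSq {A B C D : Type*} (f : A → B) (g : A → C) (h : B → D) (k : C → D) : Prop :=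
  (∀ a, h (f a) = k (g a)) ∧ ∀ b c, h b = k c → ∃! a, f a = b ∧ g a = c

/-- `[n]` as an object of the simplex category. -/
abbrev Obj (n : ℕ) : SimplexCategory := SimplexCategory.mk n

/-- The set of `n`-simplices of a simplicial set. -/
abbrev Smp (X : SSet) (n : ℕ) : Type _ := X.obj (op (Obj n))

/-- A morphism of the simplex category is *active* if it preserves endpoints. -/
def IsActive {x y : SimplexCategory} (φ : x ⟶ y) : Prop :=
  φ.toOrderHom 0 = 0 ∧ φ.toOrderHom (Fin.last x.len) = Fin.last y.len

/-- A morphism of the simplex category is *inert* if it is distance preserving. -/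
def IsInert {x y : SimplexCategory} (φ : x ⟶ y) : Prop :=
  ∀ i : Fin x.len, (φ.toOrderHom i.succ : ℕ) = (φ.toOrderHom i.castSucc : ℕ) + 1

/-- The inert inclusion `[m] ↣ [n]` sending `0` to `a`. -/
def iota (m : ℕ) {n : ℕ} (a : ℕ) (h : a + m ≤ n) : Obj m ⟶ Obj n :=
  SimplexCategory.mkHom
    ⟨fun j => ⟨a + j.1, by have := j.2; omega⟩,
     fun p q hpq => by
      simp only [Fin.mk_le_mk]
      have : p.1 ≤ q.1 := hpq
      omega⟩

/-- The `i`-th principal edge `ρ_i : [1] ↣ [k]` (an inert map). -/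
def rho {k : ℕ} (i : Fin k) : Obj 1 ⟶ Obj k :=
  iota 1 i.1 (by have := i.2; omega)

/-- The unique active map `[1] → [n]`. -/
def longMap (n : ℕ) : Obj 1 ⟶ Obj n :=
  SimplexCategory.mkHom
    ⟨fun j => ⟨j.1 * n, by
        have h : j.1 ≤ 1 := Nat.lt_succ_iff.mp j.2
        have : j.1 * n ≤ 1 * n := Nat.mul_le_mul_right n h
        omega⟩,
     fun p q hpq => by
      simp only [Fin.mk_le_mk]
      exact Nat.mul_le_mul_right n hpq⟩

/-- The long edge of an `n`-simplex. -/
def longEdge (X : SSet) (n : ℕ) (σ : Smp X n) : Smp X 1 := X.map (longMap n).op σ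

/-- The vertex map `[0] → [n]` picking out vertex `i`. -/
def vmap {n : ℕ} (i : Fin (n + 1)) : Obj 0 ⟶ Obj n :=
  SimplexCategory.mkHom ⟨fun _ => i, fun _ _ _ => le_refl _⟩

lemma vmap_comp {n m : ℕ} (j : Fin (n + 1)) (φ : Obj n ⟶ Obj m) :
    vmap j ≫ φ = vmap (φ.toOrderHom j) := by
  apply SimplexCategory.Hom.ext
  apply OrderHom.ext
  funext z
  rfl

/-- The source vertex of an edge. -/
def edgeSrc (X : SSet) : Smp X 1 → Smp X 0 := X.map (vmap (0 : Fin 2)).op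

/-- The target vertex of an edge. -/
def edgeTgt (X : SSet) : Smp X 1 → Smp X 0 := X.map (vmap (1 : Fin 2)).op

/-- Nondegeneracy of a simplex: it is not in the image of any degeneracy map. -/
def Nondeg (X : SSet) : ∀ n : ℕ, Smp X n → Prop
  | 0 => fun _ => True
  | m + 1 => fun σ =>
      ∀ (i : Fin (m + 1)) (τ : Smp X m), X.map (SimplexCategory.σ i).op τ ≠ σ

/-- A (set-valued) decomposition space: pushouts in `Δ` of active maps along
inert maps are sent to pullbacks of sets. -/
def DecompositionSpace (X : SSet) : Prop :=
  ∀ {a b c d : SimplexCategory} (f : a ⟶ b) (g : a ⟶ c) (h : b ⟶ d) (i : c ⟶ d),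
    IsActive f → IsInert g → IsPushout f g h i →
    IsPullbackSq (X.map h.op) (X.map i.op) (X.map f.op) (X.map g.op)

/-- A simplicial set is complete if `s₀ : X₀ → X₁` is injective. -/
def CompleteS (X : SSet) : Prop :=
  Function.Injective (X.map (SimplexCategory.σ (0 : Fin 1)).op : Smp X 0 → Smp X 1)

/-- A simplicial map is *ikeo* if for every active `α : [k] → [n]`, with
inert-active factorisations `ρ_i ≫ α = β_i ≫ γ_i`, the square with horizontal
maps `(γ_1,…,γ_k)*` and vertical maps induced by `f` is a pullback of sets. -/
def Ikeo {Y X : SSet} (f : Y ⟶ X) : Prop :=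
  ∀ (k n : ℕ) (α : Obj k ⟶ Obj n), IsActive α →
    ∀ (ns : Fin k → ℕ) (γ : ∀ i, Obj (ns i) ⟶ Obj n) (β : ∀ i, Obj 1 ⟶ Obj (ns i)),
      (∀ i, IsInert (γ i)) → (∀ i, IsActive (β i)) →
      (∀ i, rho i ≫ α = β i ≫ γ i) →
      IsPullbackSq
        (fun σ i => Y.map (γ i).op σ)
        (f.app (op (Obj n)))
        (fun v i => f.app (op (Obj (ns i))) (v i))
        (fun σ i => X.map (γ i).op σ)

/-- A simplicial map is *semi-ikeo* if the ikeo condition holds for every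
*injective* active `α : [k] → [n]` with `k ≥ 1`. -/
def SemiIkeo {Y X : SSet} (f : Y ⟶ X) : Prop :=
  ∀ (k n : ℕ), 1 ≤ k → ∀ (α : Obj k ⟶ Obj n), IsActive α →
    Function.Injective α.toOrderHom →
    ∀ (ns : Fin k → ℕ) (γ : ∀ i, Obj (ns i) ⟶ Obj n) (β : ∀ i, Obj 1 ⟶ Obj (ns i)),
      (∀ i, IsInert (γ i)) → (∀ i, IsActive (β i)) →
      (∀ i, rho i ≫ α = β i ≫ γ i) →
      IsPullbackSq
        (fun σ i => Y.map (γ i).op σ)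
        (f.app (op (Obj n)))
        (fun v i => f.app (op (Obj (ns i))) (v i))
        (fun σ i => X.map (γ i).op σ)

/-- The iterated fibre product `X₁ ×_{X₀} ⋯ ×_{X₀} X₁` (`n` factors). -/
def SegalSet (X : SSet) (n : ℕ) : Type _ :=
  { v : Fin n → Smp X 1 //
    ∀ (i : Fin n) (h : i.1 + 1 < n), edgeTgt X (v i) = edgeSrc X (v ⟨i.1 + 1, h⟩) }

/-- The Segal map `X_n → X₁ ×_{X₀} ⋯ ×_{X₀} X₁`. -/
def segalMap (X : SSet) (n : ℕ) (σ : Smp X n) : SegalSet X n :=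
  ⟨fun i => X.map (rho i).op σ, by
    intro i h
    show X.map (vmap (1 : Fin 2)).op (X.map (rho i).op σ) =
      X.map (vmap (0 : Fin 2)).op (X.map (rho ⟨i.1 + 1, h⟩).op σ)
    rw [← FunctorToTypes.map_comp_apply, ← FunctorToTypes.map_comp_apply,
      ← op_comp, ← op_comp, vmap_comp, vmap_comp]
    have e : (SimplexCategory.Hom.toOrderHom (rho i)) 1 =
        (SimplexCategory.Hom.toOrderHom (rho ⟨i.1 + 1, h⟩)) 0 := by
      apply Fin.ext
      simp [rho, iota]
      rfl
    rw [e]⟩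

/-- The map on iterated fibre products induced by a simplicial map. -/
def segalInduced {Y X : SSet} (f : Y ⟶ X) (n : ℕ) : SegalSet Y n → SegalSet X n :=
  fun v => ⟨fun i => f.app (op (Obj 1)) (v.1 i), by
    intro i h
    show X.map (vmap (1 : Fin 2)).op (f.app (op (Obj 1)) (v.1 i)) =
      X.map (vmap (0 : Fin 2)).op (f.app (op (Obj 1)) (v.1 ⟨i.1 + 1, h⟩))
    rw [← FunctorToTypes.naturality, ← FunctorToTypes.naturality]
    exact congrArg (f.app (op (Obj 0))) (v.2 i h)⟩

/-- A simplicial map is *inner Kan* (relatively Segal) if for each `n ≥ 2` the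
square comparing the Segal maps is a pullback of sets. -/
def InnerKan {Y X : SSet} (f : Y ⟶ X) : Prop :=
  ∀ n : ℕ, 2 ≤ n →
    IsPullbackSq (segalMap Y n) (f.app (op (Obj n))) (segalInduced f n) (segalMap X n)

/-- A simplicial map is *fully faithful* if for each `n` the square formed by
the vertex maps is a pullback of sets. -/
def FullyFaithfulMap {Y X : SSet} (f : Y ⟶ X) : Prop :=
  ∀ n : ℕ,
    IsPullbackSq
      (fun (σ : Smp Y n) (i : Fin (n + 1)) => Y.map (vmap i).op σ)
      (f.app (op (Obj n)))
      (fun v i => f.app (op (Obj 0)) (v i))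
      (fun (σ : Smp X n) (i : Fin (n + 1)) => X.map (vmap i).op σ)

/-- A *full inclusion*: a fully faithful simplicial map, injective on `0`-simplices. -/
def FullIncl {Y X : SSet} (f : Y ⟶ X) : Prop :=
  FullyFaithfulMap f ∧ Function.Injective (f.app (op (Obj 0)))

/-- A simplicial map is *culf* if its naturality square at every active map is
a pullback of sets. -/
def Culf {K X : SSet} (g : K ⟶ X) : Prop :=
  ∀ (m n : ℕ) (α : Obj m ⟶ Obj n), IsActive α →
    IsPullbackSq (K.map α.op) (g.app (op (Obj n))) (g.app (op (Obj m))) (X.map α.op)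

/-- A simplicial map is *convex* if it is a full inclusion and culf. -/
def Convex {K X : SSet} (g : K ⟶ X) : Prop := FullIncl g ∧ Culf g

/-- `Φ_n`: the set of nondegenerate `n`-simplices. -/
def Phi (X : SSet) (n : ℕ) : Type _ := { σ : Smp X n // Nondeg X n σ }

/-- The structure map of the functional `Φ_n`: the long edge. -/
def phiEdge (X : SSet) (n : ℕ) (a : Phi X n) : Smp X 1 := longEdge X n a.1

/-- Binary convolution of two linear functionals. -/
def Conv2 (X : SSet) {A B : Type*} (pa : A → Smp X 1) (pb : B → Smp X 1) : Type _ :=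
  { t : Smp X 2 × A × B //
    pa t.2.1 = X.map (rho (0 : Fin 2)).op t.1 ∧
    pb t.2.2 = X.map (rho (1 : Fin 2)).op t.1 }

/-- The structure map of a binary convolution. -/
def conv2Edge (X : SSet) {A B : Type*} {pa : A → Smp X 1} {pb : B → Smp X 1}
    (t : Conv2 X pa pb) : Smp X 1 := longEdge X 2 t.1.1

/-- Ternary convolution of three linear functionals. -/
def Conv3 (X : SSet) {A B C : Type*} (pa : A → Smp X 1) (pb : B → Smp X 1)
    (pc : C → Smp X 1) : Type _ :=
  { t : Smp X 3 × A × B × C //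
    pa t.2.1 = X.map (rho (0 : Fin 3)).op t.1 ∧
    pb t.2.2.1 = X.map (rho (1 : Fin 3)).op t.1 ∧
    pc t.2.2.2 = X.map (rho (2 : Fin 3)).op t.1 }

/-- The structure map of a ternary convolution. -/
def conv3Edge (X : SSet) {A B C : Type*} {pa : A → Smp X 1} {pb : B → Smp X 1}
    {pc : C → Smp X 1} (t : Conv3 X pa pb pc) : Smp X 1 := longEdge X 3 t.1.1

/-- `Φ_m^K` as a functional on `X`: nondegenerate `m`-simplices of `K` with
structure map the long edge, viewed in `X₁`. -/
def phiK {K X : SSet} (g : K ⟶ X) (m : ℕ) (a : Phi K m) : Smp X 1 :=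
  g.app (op (Obj 1)) (phiEdge K m a)

/-- `Φ_p^{∉K}`: nondegenerate `p`-simplices of `X` none of whose principal
edges lies in `K`. -/
def PhiNotK {K X : SSet} (g : K ⟶ X) (p : ℕ) : Type _ :=
  { σ : Smp X p // Nondeg X p σ ∧
      ∀ i : Fin p, X.map (rho i).op σ ∉ Set.range (g.app (op (Obj 1))) }

/-- The structure map of `Φ_p^{∉K}`. -/
def notKEdge {K X : SSet} (g : K ⟶ X) (p : ℕ) (a : PhiNotK g p) : Smp X 1 :=
  longEdge X p a.1

/-- `Φ_n^{∩K}`: nondegenerate `n`-simplices of `X` with at least one vertex in `K`. -/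
def PhiCap {K X : SSet} (g : K ⟶ X) (n : ℕ) : Type _ :=
  { σ : Smp X n // Nondeg X n σ ∧
      ∃ i : Fin (n + 1), X.map (vmap i).op σ ∈ Set.range (g.app (op (Obj 0))) }

/-- The structure map of `Φ_n^{∩K}`. -/
def capEdge {K X : SSet} (g : K ⟶ X) (n : ℕ) (a : PhiCap g n) : Smp X 1 :=
  longEdge X n a.1

/-- `Φ_n^{X∖K}`: nondegenerate `n`-simplices of `X` none of whose vertices lies
in `K` (i.e. nondegenerate simplices of the full hull of `X₀ ∖ K₀`). -/
def PhiComp {K X : SSet} (g : K ⟶ X) (n : ℕ) : Type _ :=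
  { σ : Smp X n // Nondeg X n σ ∧
      ∀ i : Fin (n + 1), X.map (vmap i).op σ ∉ Set.range (g.app (op (Obj 0))) }

/-- The structure map of `Φ_n^{X∖K}`. -/
def compEdge {K X : SSet} (g : K ⟶ X) (n : ℕ) (a : PhiComp g n) : Smp X 1 :=
  longEdge X n a.1

/-- `Φ_even`. -/
def PhiEven (X : SSet) : Type _ := Σ n : { n : ℕ // Even n }, Phi X n.1

/-- The structure map of `Φ_even`. -/
def evenEdge (X : SSet) (a : PhiEven X) : Smp X 1 := phiEdge X a.1.1 a.2

/-- `Φ_odd`. -/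
def PhiOdd (X : SSet) : Type _ := Σ n : { n : ℕ // Odd n }, Phi X n.1

/-- The structure map of `Φ_odd`. -/
def oddEdge (X : SSet) (a : PhiOdd X) : Smp X 1 := phiEdge X a.1.1 a.2

/-- `Φ_even^{X∖K}`. -/
def PhiCompEven {K X : SSet} (g : K ⟶ X) : Type _ :=
  Σ n : { n : ℕ // Even n }, PhiComp g n.1

/-- The structure map of `Φ_even^{X∖K}`. -/
def compEvenEdge {K X : SSet} (g : K ⟶ X) (a : PhiCompEven g) : Smp X 1 :=
  compEdge g a.1.1 a.2

/-- `Φ_odd^{X∖K}`. -/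
def PhiCompOdd {K X : SSet} (g : K ⟶ X) : Type _ :=
  Σ n : { n : ℕ // Odd n }, PhiComp g n.1

/-- The structure map of `Φ_odd^{X∖K}`. -/
def compOddEdge {K X : SSet} (g : K ⟶ X) (a : PhiCompOdd g) : Smp X 1 :=
  compEdge g a.1.1 a.2


lemma rho_val {k : ℕ} (i : Fin k) (z : Fin 2) : ((rho i).toOrderHom z : ℕ) = i.1 + z.1 := rfl

lemma comp_val {a b c : SimplexCategory} (φ : a ⟶ b) (ψ : b ⟶ c) (z : Fin (a.len + 1)) :
    (φ ≫ ψ).toOrderHom z = ψ.toOrderHom (φ.toOrderHom z) := rfl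

lemma inert_val {m n : ℕ} (φ : Obj m ⟶ Obj n) (h : IsInert φ) (j : Fin (m + 1)) :
    (φ.toOrderHom j : ℕ) = (φ.toOrderHom 0 : ℕ) + j.1 := by
  induction j using Fin.induction with
  | zero => simp
  | succ j ih =>
    have hj := h j
    have h1 : (j.succ : Fin (m+1)).1 = (j.castSucc : Fin (m+1)).1 + 1 := by simp
    omega

lemma id_active (n : ℕ) : IsActive (𝟙 (Obj n)) := ⟨rfl, rfl⟩

lemma rho_inert {k : ℕ} (i : Fin k) : IsInert (rho i) := by
  intro j
  show i.1 + (j.1 + 1) = (i.1 + j.1) + 1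
  omega

lemma smp_congr (Y : SSet) {k : ℕ} {ns : Fin k → ℕ} (b : ∀ i, Smp Y (ns i))
    {i1 i2 : Fin k} (e : i1 = i2) (j1 : Fin (ns i1)) (j2 : Fin (ns i2))
    (hv : j1.1 = j2.1) : Y.map (rho j1).op (b i1) = Y.map (rho j2).op (b i2) := by
  subst e
  have : j1 = j2 := Fin.ext hv
  subst this
  rfl

/-- A simplicial map is ikeo iff for each `n ≥ 0` the square formed by the
principal-edge maps `(ρ_1,…,ρ_n)*` is a pullback of sets. -/
theorem ikeo_iff_principal_edge_squares {Y X : SSet} (f : Y ⟶ X) :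
    Ikeo f ↔
      ∀ n : ℕ,
        IsPullbackSq
          (fun (σ : Smp Y n) (i : Fin n) => Y.map (rho i).op σ)
          (f.app (op (Obj n)))
          (fun v i => f.app (op (Obj 1)) (v i))
          (fun (σ : Smp X n) (i : Fin n) => X.map (rho i).op σ) := by
  constructor
  · intro hI n
    exact hI n n (𝟙 (Obj n)) (id_active n) (fun _ => 1) (fun i => rho i) (fun _ => 𝟙 (Obj 1))
      (fun i => rho_inert i) (fun _ => id_active 1) (fun i => by simp)
  · intro H k n α hα ns γ β hγinert hβ hcomm
    classical
    -- numeric bookkeeping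
    have hA0 : (α.toOrderHom 0 : ℕ) = 0 := congrArg Fin.val hα.1
    have hAl : (α.toOrderHom (Fin.last k) : ℕ) = n := congrArg Fin.val hα.2
    have hmono : ∀ s t : Fin (k + 1), s ≤ t → (α.toOrderHom s : ℕ) ≤ (α.toOrderHom t : ℕ) :=
      fun s t hst => α.toOrderHom.monotone hst
    have hγ0 : ∀ i : Fin k, ((γ i).toOrderHom 0 : ℕ) = (α.toOrderHom i.castSucc : ℕ) := by
      intro i
      have h0 : (((rho i ≫ α).toOrderHom) (0 : Fin 2) : ℕ) =
          (((β i ≫ γ i).toOrderHom) (0 : Fin 2) : ℕ) := by rw [hcomm i]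
      rw [comp_val, comp_val] at h0
      have hr : ((rho i).toOrderHom (0 : Fin 2)) = i.castSucc := by
        apply Fin.ext
        show i.1 + 0 = i.1
        omega
      rw [hr] at h0
      have hb0 : ((β i).toOrderHom (0 : Fin 2)) = 0 := (hβ i).1
      rw [hb0] at h0
      exact h0.symm
    have hns : ∀ i : Fin k, (α.toOrderHom i.castSucc : ℕ) + ns i = (α.toOrderHom i.succ : ℕ) := by
      intro i
      have h1 : (((rho i ≫ α).toOrderHom) (1 : Fin 2) : ℕ) =
          (((β i ≫ γ i).toOrderHom) (1 : Fin 2) : ℕ) := by rw [hcomm i]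
      rw [comp_val, comp_val] at h1
      have hr : ((rho i).toOrderHom (1 : Fin 2)) = i.succ := by
        apply Fin.ext
        show i.1 + 1 = i.1 + 1
        rfl
      rw [hr] at h1
      have hb1 : ((β i).toOrderHom (1 : Fin 2)) = Fin.last (ns i) := by
        have := (hβ i).2
        convert this using 2
        rfl
      rw [hb1] at h1
      rw [inert_val (γ i) (hγinert i) (Fin.last (ns i))] at h1
      rw [hγ0 i] at h1
      have : (Fin.last (ns i)).1 = ns i := rfl
      omega
    have hsuccle : ∀ i : Fin k, (α.toOrderHom i.succ : ℕ) ≤ n := by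
      intro i
      have : i.succ ≤ Fin.last k := by
        rw [Fin.le_def]
        have := i.2
        simp [Fin.val_succ]
      have := hmono i.succ (Fin.last k) this
      omega
    -- composition of a principal edge of the subinterval with γ i
    have hbound : ∀ (i : Fin k) (j' : Fin (ns i)),
        (α.toOrderHom i.castSucc : ℕ) + j'.1 < n := by
      intro i j'
      have := j'.2
      have := hns i
      have := hsuccle i
      omega
    have hcompGamma : ∀ (i : Fin k) (j' : Fin (ns i)),
        rho j' ≫ γ i = rho (⟨(α.toOrderHom i.castSucc : ℕ) + j'.1, hbound i j'⟩ : Fin n) := by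
      intro i j'
      apply SimplexCategory.Hom.ext
      apply OrderHom.ext
      funext z
      apply Fin.ext
      show ((γ i).toOrderHom ((rho j').toOrderHom z) : ℕ) =
        ((α.toOrderHom i.castSucc : ℕ) + j'.1) + z.1
      have h1 : ((rho j').toOrderHom z : ℕ) = j'.1 + z.1 := rfl
      have h2 := inert_val (γ i) (hγinert i) ((rho j').toOrderHom z)
      rw [h2, h1, hγ0 i]
      omega
    -- the interval finding function
    have hfind : ∀ j : Fin n, ∃ i : Fin k,
        (α.toOrderHom i.castSucc : ℕ) ≤ j.1 ∧ j.1 < (α.toOrderHom i.succ : ℕ) := by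
      intro j
      have hjn : j.1 < n := j.2
      have hk : 0 < k := by
        rcases Nat.eq_zero_or_pos k with h | h
        · exfalso
          subst h
          have : (Fin.last 0 : Fin 1) = 0 := rfl
          rw [this] at hAl
          omega
        · exact h
      have hP : ∃ t, ∃ h : t < k, j.1 < (α.toOrderHom (⟨t, h⟩ : Fin k).succ : ℕ) := by
        refine ⟨k - 1, by omega, ?_⟩
        have he : ((⟨k - 1, by omega⟩ : Fin k).succ : Fin (k + 1)) = Fin.last k := by
          apply Fin.ext
          simp [Fin.val_succ]
          omega
        rw [he, hAl]
        exact hjn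
      set m := Nat.find hP with hm
      obtain ⟨hmk, hjm⟩ := Nat.find_spec hP
      refine ⟨⟨m, hmk⟩, ?_, hjm⟩
      rcases Nat.eq_zero_or_pos m with h0 | h0
      · have : ((⟨m, hmk⟩ : Fin k).castSucc : Fin (k + 1)) = 0 := by
          apply Fin.ext; simpa using h0
        rw [this, hA0]
        omega
      · have hnot := Nat.find_min hP (show m - 1 < m by omega)
        push_neg at hnot
        have hm1k : m - 1 < k := by omega
        have := hnot hm1k
        have he : ((⟨m - 1, hm1k⟩ : Fin k).succ : Fin (k + 1)) =
            ((⟨m, hmk⟩ : Fin k).castSucc : Fin (k + 1)) := by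
          apply Fin.ext
          simp [Fin.val_succ]
          omega
        rw [he] at this
        omega
    choose I hI1 hI2 using hfind
    have huniq : ∀ (j : Fin n) (i : Fin k),
        (α.toOrderHom i.castSucc : ℕ) ≤ j.1 → j.1 < (α.toOrderHom i.succ : ℕ) → I j = i := by
      intro j i h1 h2
      by_contra hne
      have h1' := hI1 j
      have h2' := hI2 j
      rcases Nat.lt_or_ge (I j).1 i.1 with hlt | hge
      · have : (I j).succ ≤ i.castSucc := by
          rw [Fin.le_def]; simp [Fin.val_succ]; omega
        have := hmono _ _ this
        omega
      · have hlt : i.1 < (I j).1 := by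
          rcases Nat.lt_or_ge i.1 (I j).1 with h | h
          · exact h
          · exact absurd (Fin.ext (by omega : i.1 = (I j).1)).symm hne
        have : i.succ ≤ (I j).castSucc := by
          rw [Fin.le_def]; simp [Fin.val_succ]; omega
        have := hmono _ _ this
        omega
    -- index within the subinterval
    have hsub : ∀ j : Fin n, j.1 - (α.toOrderHom (I j).castSucc : ℕ) < ns (I j) := by
      intro j
      have h1 := hI1 j
      have h2 := hI2 j
      have h3 := hns (I j)
      omega
    -- the matching lemma
    have hmatch : ∀ (i : Fin k) (j' : Fin (ns i)),
        I ⟨(α.toOrderHom i.castSucc : ℕ) + j'.1, hbound i j'⟩ = i := by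
      intro i j'
      apply huniq
      · simp
      · have := j'.2
        have := hns i
        simp
        omega
    refine ⟨?_, ?_⟩
    · intro a
      funext i
      exact FunctorToTypes.naturality f (γ i).op a
    · intro b c hbc
      have hbc' : ∀ i, f.app (op (Obj (ns i))) (b i) = X.map (γ i).op c := fun i => congrFun hbc i
      set w : Fin n → Smp Y 1 := fun j =>
        Y.map (rho (⟨j.1 - (α.toOrderHom (I j).castSucc : ℕ), hsub j⟩ : Fin (ns (I j)))).op
          (b (I j)) with hw
      have hwspec : ∀ (i : Fin k) (j' : Fin (ns i)),
          w ⟨(α.toOrderHom i.castSucc : ℕ) + j'.1, hbound i j'⟩ = Y.map (rho j').op (b i) := by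
        intro i j'
        rw [hw]
        apply smp_congr Y b (hmatch i j')
        have := congrArg (fun t => ((α.toOrderHom (Fin.castSucc t)) : ℕ)) (hmatch i j')
        simp only at this
        simp
        omega
      -- compatibility of w with c
      have hwc : (fun (v : Fin n → Smp Y 1) i => f.app (op (Obj 1)) (v i)) w =
          (fun (σ : Smp X n) (i : Fin n) => X.map (rho i).op σ) c := by
        funext j
        show f.app (op (Obj 1)) (w j) = X.map (rho j).op c
        rw [hw]
        simp only
        rw [FunctorToTypes.naturality f]
        rw [hbc' (I j)]
        rw [← FunctorToTypes.map_comp_apply, ← op_comp, hcompGamma]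
        have hj : (⟨(α.toOrderHom (I j).castSucc : ℕ) +
            (⟨j.1 - (α.toOrderHom (I j).castSucc : ℕ), hsub j⟩ : Fin (ns (I j))).1,
            hbound (I j) _⟩ : Fin n) = j := by
          apply Fin.ext
          have := hI1 j
          simp
          omega
        rw [hj]
      obtain ⟨a, ⟨ha1, ha2⟩, hauniq⟩ := (H n).2 w c hwc
      -- the candidate a; show Y.map (γ i).op a = b i for each i
      have hgam : ∀ i : Fin k, Y.map (γ i).op a = b i := by
        intro i
        have hsq := (H (ns i)).2 (fun j' => Y.map (rho j').op (b i)) (X.map (γ i).op c)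
          (by
            funext j'
            show f.app (op (Obj 1)) (Y.map (rho j').op (b i)) =
              X.map (rho j').op (X.map (γ i).op c)
            rw [FunctorToTypes.naturality f, hbc' i])
        obtain ⟨u, _, hu⟩ := hsq
        have e1 := hu (Y.map (γ i).op a) ⟨by
          funext j'
          show Y.map (rho j').op (Y.map (γ i).op a) = Y.map (rho j').op (b i)
          rw [← FunctorToTypes.map_comp_apply, ← op_comp, hcompGamma i j']
          exact (congrFun ha1 (⟨(α.toOrderHom i.castSucc : ℕ) + j'.1, hbound i j'⟩ : Fin n)).trans
            (hwspec i j'), by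
          show f.app (op (Obj (ns i))) (Y.map (γ i).op a) = X.map (γ i).op c
          rw [FunctorToTypes.naturality f, ha2]⟩
        have e2 := hu (b i) ⟨rfl, hbc' i⟩
        rw [e1, e2]
      refine ⟨a, ⟨funext hgam, ha2⟩, ?_⟩
      intro a' ⟨h1', h2'⟩
      apply hauniq
      refine ⟨?_, h2'⟩
      funext j
      show Y.map (rho j).op a' = w j
      have hj : (⟨(α.toOrderHom (I j).castSucc : ℕ) +
          (⟨j.1 - (α.toOrderHom (I j).castSucc : ℕ), hsub j⟩ : Fin (ns (I j))).1,
          hbound (I j) _⟩ : Fin n) = j := by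
        apply Fin.ext
        have := hI1 j
        simp
        omega
      have := hwspec (I j) ⟨j.1 - (α.toOrderHom (I j).castSucc : ℕ), hsub j⟩
      rw [hj] at this
      rw [this]
      rw [← congrFun h1' (I j)]
      show Y.map (rho _).op a' = Y.map (rho _).op (Y.map (γ (I j)).op a')
      rw [← FunctorToTypes.map_comp_apply, ← op_comp, hcompGamma]
      rw [hj]

end Crapo
end

section
/- Let f : Y → X be a semi-ikeo simplicial map of simplicial sets. If X is a decomposition space, then Y is also a decomposition space. -/
open CategoryTheory Opposite

namespace Crapo

-- ### auxiliary lemmas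

lemma homext {x y : SimplexCategory} {φ ψ : x ⟶ y}
    (H : ∀ j, (φ.toOrderHom j : ℕ) = (ψ.toOrderHom j : ℕ)) : φ = ψ := by
  apply SimplexCategory.Hom.ext
  apply OrderHom.ext
  funext j
  exact Fin.ext (H j)

lemma ohmono {x y : SimplexCategory} (φ : x ⟶ y) {p q : Fin (x.len + 1)}
    (hpq : (p : ℕ) ≤ q) : (φ.toOrderHom p : ℕ) ≤ φ.toOrderHom q :=
  φ.toOrderHom.monotone hpq

lemma oh_congr {x y : SimplexCategory} (φ : x ⟶ y) {p q : Fin (x.len + 1)}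
    (h : (p : ℕ) = q) : (φ.toOrderHom p : ℕ) = φ.toOrderHom q :=
  congrArg (fun z => ((φ.toOrderHom z : Fin (y.len+1)) : ℕ)) (Fin.ext h)

lemma iota_val (m n a : ℕ) (h : a + m ≤ n) (j : Fin (m + 1)) :
    ((iota m a h).toOrderHom j : ℕ) = a + j.1 := rfl

lemma iota_congr {m n a a' : ℕ} (h : a + m ≤ n) (h' : a' + m ≤ n) (e : a = a') :
    iota m a h = iota m (n := n) a' h' := by subst e; rfl

lemma iota_comp {p q m a n : ℕ} (h1 : q + p ≤ m) (h2 : a + m ≤ n) :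
    iota p q h1 ≫ iota m a h2 = iota p (a + q) (by omega) :=
  homext fun j => by
    show a + (q + j.1) = (a + q) + j.1
    omega

lemma iota_isInert {m n a : ℕ} (h : a + m ≤ n) : IsInert (iota m a h) := fun i => rfl

lemma longMap_isActive (n : ℕ) : IsActive (longMap n) := by
  constructor
  · exact Fin.ext (by show (0 : Fin 2).1 * n = 0; simp)
  · exact Fin.ext (by show (Fin.last 1).1 * n = n; simp [Fin.last])

lemma smap_comp (Z : SSet) {x y z : SimplexCategory} (φ : x ⟶ y) (ψ : y ⟶ z)
    (σ : Z.obj (op z)) : Z.map (φ ≫ ψ).op σ = Z.map φ.op (Z.map ψ.op σ) := by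
  rw [op_comp]
  exact FunctorToTypes.map_comp_apply Z ψ.op φ.op σ

lemma smap_id (Z : SSet) {x : SimplexCategory} (φ : x ⟶ x) (hφ : φ = 𝟙 x)
    (σ : Z.obj (op x)) : Z.map φ.op σ = σ := by
  rw [hφ, op_id, FunctorToTypes.map_id_apply]

lemma snat {Y X : SSet} (f : Y ⟶ X) {x y : SimplexCategory} (φ : x ⟶ y)
    (σ : Y.obj (op y)) :
    f.app (op x) (Y.map φ.op σ) = X.map φ.op (f.app (op y) σ) :=
  FunctorToTypes.naturality f φ.op σ

lemma pbsq_equiv {A A' B C D : Type*} {p : A → B} {q : A → C} {u : B → D} {v : C → D}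
    (e : A' → A) (e' : A → A') (h1 : ∀ x, e (e' x) = x) (h2 : ∀ x, e' (e x) = x)
    (hp : IsPullbackSq (fun x => p (e x)) (fun x => q (e x)) u v) :
    IsPullbackSq p q u v := by
  constructor
  · intro a
    have := hp.1 (e' a)
    simpa [h1] using this
  · intro b c hbc
    obtain ⟨a', ⟨ha1, ha2⟩, hau⟩ := hp.2 b c hbc
    refine ⟨e a', ⟨ha1, ha2⟩, ?_⟩
    rintro y ⟨hy1, hy2⟩
    rw [← h1 y]
    refine congrArg e (hau (e' y) ⟨?_, ?_⟩)
    · show p (e (e' y)) = b; rw [h1]; exact hy1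
    · show q (e (e' y)) = c; rw [h1]; exact hy2

lemma pbsq_equiv' {A A' B C D : Type*} {p : A → B} {q : A → C} {u : B → D} {v : C → D}
    (e : A' → A) (e' : A → A') (h1 : ∀ x, e (e' x) = x) (h2 : ∀ x, e' (e x) = x)
    (hp : IsPullbackSq p q u v) :
    IsPullbackSq (fun x => p (e x)) (fun x => q (e x)) u v := by
  constructor
  · intro a'
    exact hp.1 (e a')
  · intro b c hbc
    obtain ⟨a, ⟨h1a, h2a⟩, hau⟩ := hp.2 b c hbc
    refine ⟨e' a, ⟨?_, ?_⟩, ?_⟩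
    · show p (e (e' a)) = b; rw [h1]; exact h1a
    · show q (e (e' a)) = c; rw [h1]; exact h2a
    · rintro y ⟨hy1, hy2⟩
      have := hau (e y) ⟨hy1, hy2⟩
      rw [← h2 y, this]

lemma pbsq_of_bij {A B C D : Type*} {p : A → B} {q : A → C} {u : B → D} {v : C → D}
    (hcomm : ∀ a, u (p a) = v (q a)) (pi : B → A)
    (hp1 : ∀ x, pi (p x) = x) (hp2 : ∀ x, p (pi x) = x)
    (vinj : ∀ x y, v x = v y → x = y) : IsPullbackSq p q u v := by
  refine ⟨hcomm, fun b c hbc => ⟨pi b, ⟨hp2 b, vinj _ _ ?_⟩, ?_⟩⟩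
  · rw [← hcomm (pi b), hp2 b]; exact hbc
  · rintro y ⟨hy1, hy2⟩
    rw [← hy1, hp1]

lemma inert_val_s6 {x y : SimplexCategory} {φ : x ⟶ y} (hφ : IsInert φ) :
    ∀ j : Fin (x.len + 1), (φ.toOrderHom j : ℕ) = (φ.toOrderHom 0 : ℕ) + j.1 := by
  rintro ⟨jv, hj⟩
  induction jv with
  | zero =>
      have e : ((⟨0, hj⟩ : Fin (x.len + 1))) = 0 := Fin.ext (by simp)
      rw [e]
      simp
  | succ n ih =>
      have hn : n < x.len := by omega
      have hn1 : n < x.len + 1 := by omega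
      calc (φ.toOrderHom ⟨n + 1, hj⟩ : ℕ)
          = (φ.toOrderHom (Fin.succ ⟨n, hn⟩) : ℕ) := oh_congr φ rfl
        _ = (φ.toOrderHom (Fin.castSucc ⟨n, hn⟩) : ℕ) + 1 := hφ ⟨n, hn⟩
        _ = (φ.toOrderHom ⟨n, hn1⟩ : ℕ) + 1 := by
              rw [oh_congr φ (show ((Fin.castSucc ⟨n, hn⟩) : ℕ) = ((⟨n, hn1⟩ : Fin (x.len + 1)) : ℕ) from rfl)]
        _ = ((φ.toOrderHom 0 : ℕ) + n) + 1 := by rw [ih hn1]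
        _ = (φ.toOrderHom 0 : ℕ) + (n + 1) := by omega

lemma Ekgen {Y X : SSet} {f : Y ⟶ X} (hf : SemiIkeo f) (k N : ℕ) (hk : 1 ≤ k)
    (L o : Fin k → ℕ) (hL : ∀ i, 1 ≤ L i) (ho : ∀ i, o i + L i ≤ N)
    (hfirst : ∀ i : Fin k, i.1 = 0 → o i = 0)
    (hchain : ∀ i j : Fin k, j.1 = i.1 + 1 → o j = o i + L i)
    (hlast : ∀ i : Fin k, i.1 + 1 = k → o i + L i = N)
    (x : Smp X N) (v : ∀ i, Smp Y (L i))
    (hv : ∀ i, f.app (op (Obj (L i))) (v i) = X.map (iota (L i) (o i) (ho i)).op x) :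
    ∃! y : Smp Y N, f.app (op (Obj N)) y = x ∧
      ∀ i, Y.map (iota (L i) (o i) (ho i)).op y = v i := by
  -- the cells are increasing along the chain
  have key : ∀ n (hn : n < k) (i : Fin k), i.1 ≤ n →
      o i + L i ≤ o ⟨n, hn⟩ + L ⟨n, hn⟩ := by
    intro n
    induction n with
    | zero =>
        intro hn i hi
        have : i = ⟨0, hn⟩ := Fin.ext (show i.1 = 0 by omega)
        rw [this]
    | succ n ih =>
        intro hn i hi
        rcases Nat.lt_or_ge i.1 (n + 1) with hlt | hge
        · have h1 := ih (by omega) i (by omega)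
          have h2 := hchain ⟨n, by omega⟩ ⟨n + 1, hn⟩ rfl
          have h3 := hL (⟨n + 1, hn⟩ : Fin k)
          omega
        · have : i = ⟨n + 1, hn⟩ := Fin.ext (show i.1 = n + 1 by omega)
          rw [this]
  have omono : ∀ (i j : Fin k), i.1 < j.1 → o i + L i ≤ o j := by
    intro i j hij
    have hj1 : j.1 - 1 < k := by omega
    have h1 := key (j.1 - 1) hj1 i (by omega)
    have h2 := hchain ⟨j.1 - 1, hj1⟩ j (show j.1 = (j.1 - 1) + 1 by omega)
    rw [h2]
    exact h1
  -- the vertex function of α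
  set ζ : Fin (k + 1) → ℕ := fun j => if h : j.1 < k then o ⟨j.1, h⟩ else N with hζdef
  have hζl : ∀ (i : Fin k) (w : i.1 < k + 1), ζ ⟨i.1, w⟩ = o i := by
    intro i w
    show (if h : i.1 < k then o ⟨i.1, h⟩ else N) = o i
    rw [dif_pos i.2]
  have hζr : ∀ (i : Fin k) (w : i.1 + 1 < k + 1), ζ ⟨i.1 + 1, w⟩ = o i + L i := by
    intro i w
    show (if h : i.1 + 1 < k then o ⟨i.1 + 1, h⟩ else N) = o i + L i
    by_cases hik : i.1 + 1 < k
    · rw [dif_pos hik]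
      exact hchain i ⟨i.1 + 1, hik⟩ rfl
    · rw [dif_neg hik]
      exact (hlast i (by omega)).symm
  have hζbound : ∀ j, ζ j ≤ N := by
    intro j
    show (if h : j.1 < k then o ⟨j.1, h⟩ else N) ≤ N
    by_cases hjk : j.1 < k
    · rw [dif_pos hjk]
      have := ho ⟨j.1, hjk⟩
      omega
    · rw [dif_neg hjk]
  have hζstrict : ∀ p q : Fin (k + 1), p.1 < q.1 → ζ p < ζ q := by
    intro p q hpq
    have hpk : p.1 < k := by omega
    have hζp : ζ p = o ⟨p.1, hpk⟩ := hζl ⟨p.1, hpk⟩ p.2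
    by_cases hqk : q.1 < k
    · have hζq : ζ q = o ⟨q.1, hqk⟩ := hζl ⟨q.1, hqk⟩ q.2
      have := omono ⟨p.1, hpk⟩ ⟨q.1, hqk⟩ hpq
      have := hL (⟨p.1, hpk⟩ : Fin k)
      omega
    · have hζq : ζ q = N := by
        show (if h : q.1 < k then o ⟨q.1, h⟩ else N) = N
        rw [dif_neg hqk]
      have := ho ⟨p.1, hpk⟩
      have := hL (⟨p.1, hpk⟩ : Fin k)
      omega
  have hζmono : ∀ p q : Fin (k + 1), p.1 ≤ q.1 → ζ p ≤ ζ q := by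
    intro p q hpq
    rcases Nat.lt_or_ge p.1 q.1 with h | h
    · exact le_of_lt (hζstrict p q h)
    · have : p = q := Fin.ext (by omega)
      rw [this]
  set α : Obj k ⟶ Obj N := SimplexCategory.mkHom
    ⟨fun j => ⟨ζ j, by have := hζbound j; omega⟩,
     fun p q hpq => by
      simp only [Fin.mk_le_mk]
      exact hζmono p q hpq⟩ with hαdef
  have hαval : ∀ j : Fin (k + 1), (α.toOrderHom j : ℕ) = ζ j := fun j => rfl
  have hαact : IsActive α := by
    constructor
    · apply Fin.ext
      show ζ 0 = ((0 : Fin (N + 1)) : ℕ)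
      have h0 : ((0 : Fin (k + 1)) : ℕ) = 0 := rfl
      have := hζl ⟨0, by omega⟩ (by omega)
      have hf0 := hfirst ⟨0, by omega⟩ rfl
      rw [show (0 : Fin (k+1)) = ⟨0, by omega⟩ from Fin.ext h0, this, hf0]
      rfl
    · apply Fin.ext
      show ζ (Fin.last k) = ((Fin.last N : Fin (N + 1)) : ℕ)
      show (if h : (Fin.last k).1 < k then o ⟨(Fin.last k).1, h⟩ else N) = (Fin.last N : Fin (N+1)).1
      rw [dif_neg (by simp [Fin.last])]
      rfl
  have hαinj : Function.Injective α.toOrderHom := by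
    intro p q hpq
    have hv' : ζ p = ζ q := by
      have := congrArg Fin.val hpq
      rw [← hαval p, ← hαval q]
      exact this
    rcases lt_trichotomy p.1 q.1 with h | h | h
    · exact absurd hv' (Nat.ne_of_lt (hζstrict p q h))
    · exact Fin.ext h
    · exact absurd hv'.symm (Nat.ne_of_lt (hζstrict q p h))
  have hαv2 : ∀ (z : ℕ) (w : z < k + 1),
      ζ ⟨z, w⟩ = if h : z < k then o ⟨z, h⟩ else N := fun _ _ => rfl
  have hcomm : ∀ i : Fin k, rho i ≫ α =
      longMap (L i) ≫ iota (L i) (o i) (ho i) := by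
    intro i
    apply homext
    intro j
    have hi2 := i.2
    have hj2 : j.1 < 1 + 1 := j.2
    show ζ ⟨i.1 + j.1, by omega⟩ = o i + j.1 * L i
    have hj01 : j.1 = 0 ∨ j.1 = 1 := by omega
    rcases hj01 with hj | hj
    · have hcond : i.1 + j.1 < k := by omega
      rw [hαv2, dif_pos hcond,
        show (⟨i.1 + j.1, hcond⟩ : Fin k) = i from Fin.ext (show i.1 + j.1 = i.1 by omega), hj]
      simp
    · by_cases hik : i.1 + 1 < k
      · have hcond : i.1 + j.1 < k := by omega
        rw [hαv2, dif_pos hcond]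
        have hch := hchain i ⟨i.1 + j.1, hcond⟩ (show i.1 + j.1 = i.1 + 1 by omega)
        rw [hch, hj, one_mul]
      · have hcond : ¬(i.1 + j.1 < k) := by omega
        rw [hαv2, dif_neg hcond]
        have hla := hlast i (by omega)
        rw [hj, one_mul]
        omega
  have PB := hf k N hk α hαact hαinj L (fun i => iota (L i) (o i) (ho i))
    (fun i => longMap (L i)) (fun i => iota_isInert _) (fun i => longMap_isActive _) hcomm
  obtain ⟨y, ⟨hy1, hy2⟩, hyu⟩ := PB.2 v x (funext fun i => hv i)
  refine ⟨y, ⟨hy2, fun i => congrFun hy1 i⟩, ?_⟩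
  rintro y' ⟨h1', h2'⟩
  exact hyu y' ⟨funext h2', h1'⟩

lemma T3 {Y X : SSet} {f : Y ⟶ X} (hf : SemiIkeo f) (s m t N : ℕ)
    (hN : s + m + t = N) (hNpos : 1 ≤ N)
    (pf1 : 0 + s ≤ N) (pf2 : s + m ≤ N) (pf3 : s + m + t ≤ N)
    (x : Smp X N) (v1 : Smp Y s) (v2 : Smp Y m) (v3 : Smp Y t)
    (h1 : f.app (op (Obj s)) v1 = X.map (iota s 0 pf1).op x)
    (h2 : f.app (op (Obj m)) v2 = X.map (iota m s pf2).op x)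
    (h3 : f.app (op (Obj t)) v3 = X.map (iota t (s + m) pf3).op x) :
    ∃! y : Smp Y N, f.app (op (Obj N)) y = x ∧
      (1 ≤ s → Y.map (iota s 0 pf1).op y = v1) ∧
      (1 ≤ m → Y.map (iota m s pf2).op y = v2) ∧
      (1 ≤ t → Y.map (iota t (s + m) pf3).op y = v3) := by
  rcases Nat.eq_zero_or_pos s with hs | hs <;>
    rcases Nat.eq_zero_or_pos m with hm | hm <;>
      rcases Nat.eq_zero_or_pos t with ht | ht
  -- case s = 0, m = 0, t = 0 : impossible
  · omega
  -- case s = 0, m = 0, t > 0 : one piece t at s + m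
  · obtain ⟨y, ⟨hy0, hyr⟩, hyu⟩ := Ekgen hf 1 N (by omega)
      (fun _ => t) (fun _ => s + m) (fun _ => ht) (fun _ => by omega)
      (fun _ _ => by omega) (fun i j hij => by have := i.2; have := j.2; omega)
      (fun _ _ => by omega) x (fun _ => v3) (fun _ => h3)
    refine ⟨y, ⟨hy0, fun h => by omega, fun h => by omega, fun _ => hyr 0⟩, ?_⟩
    rintro y' ⟨hy0', _, _, hr3⟩
    exact hyu y' ⟨hy0', fun _ => hr3 ht⟩
  -- case s = 0, m > 0, t = 0 : one piece m at s
  · obtain ⟨y, ⟨hy0, hyr⟩, hyu⟩ := Ekgen hf 1 N (by omega)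
      (fun _ => m) (fun _ => s) (fun _ => hm) (fun _ => by omega)
      (fun _ _ => by omega) (fun i j hij => by have := i.2; have := j.2; omega)
      (fun _ _ => by omega) x (fun _ => v2) (fun _ => h2)
    refine ⟨y, ⟨hy0, fun h => by omega, fun _ => hyr 0, fun h => by omega⟩, ?_⟩
    rintro y' ⟨hy0', _, hr2, _⟩
    exact hyu y' ⟨hy0', fun _ => hr2 hm⟩
  -- case s = 0, m > 0, t > 0 : two pieces (m at s), (t at s+m)
  · obtain ⟨y, ⟨hy0, hyr⟩, hyu⟩ := Ekgen hf 2 N (by omega)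
      (fun i => if i.1 = 0 then m else t) (fun i => if i.1 = 0 then s else s + m)
      (fun i => by split_ifs <;> omega)
      (fun i => by split_ifs <;> omega)
      (fun i hi => by split_ifs <;> omega)
      (fun i j hij => by have := i.2; have := j.2; split_ifs <;> omega)
      (fun i hi => by have := i.2; split_ifs <;> omega)
      x (Fin.cons v2 (Fin.cons v3 finZeroElim))
      (by intro i
          fin_cases i
          · exact h2
          · exact h3)
    refine ⟨y, ⟨hy0, fun h => by omega, fun _ => hyr 0, fun _ => hyr 1⟩, ?_⟩
    rintro y' ⟨hy0', _, hr2, hr3⟩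
    refine hyu y' ⟨hy0', ?_⟩
    intro i
    fin_cases i
    · exact hr2 hm
    · exact hr3 ht
  -- case s > 0, m = 0, t = 0 : one piece s at 0
  · obtain ⟨y, ⟨hy0, hyr⟩, hyu⟩ := Ekgen hf 1 N (by omega)
      (fun _ => s) (fun _ => 0) (fun _ => hs) (fun _ => by omega)
      (fun _ _ => rfl) (fun i j hij => by have := i.2; have := j.2; omega)
      (fun _ _ => by omega) x (fun _ => v1) (fun _ => h1)
    refine ⟨y, ⟨hy0, fun _ => hyr 0, fun h => by omega, fun h => by omega⟩, ?_⟩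
    rintro y' ⟨hy0', hr1, _, _⟩
    exact hyu y' ⟨hy0', fun _ => hr1 hs⟩
  -- case s > 0, m = 0, t > 0 : two pieces (s at 0), (t at s+m)
  · obtain ⟨y, ⟨hy0, hyr⟩, hyu⟩ := Ekgen hf 2 N (by omega)
      (fun i => if i.1 = 0 then s else t) (fun i => if i.1 = 0 then 0 else s + m)
      (fun i => by split_ifs <;> omega)
      (fun i => by split_ifs <;> omega)
      (fun i hi => by split_ifs <;> omega)
      (fun i j hij => by have := i.2; have := j.2; split_ifs <;> omega)
      (fun i hi => by have := i.2; split_ifs <;> omega)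
      x (Fin.cons v1 (Fin.cons v3 finZeroElim))
      (by intro i
          fin_cases i
          · exact h1
          · exact h3)
    refine ⟨y, ⟨hy0, fun _ => hyr 0, fun h => by omega, fun _ => hyr 1⟩, ?_⟩
    rintro y' ⟨hy0', hr1, _, hr3⟩
    refine hyu y' ⟨hy0', ?_⟩
    intro i
    fin_cases i
    · exact hr1 hs
    · exact hr3 ht
  -- case s > 0, m > 0, t = 0 : two pieces (s at 0), (m at s)
  · obtain ⟨y, ⟨hy0, hyr⟩, hyu⟩ := Ekgen hf 2 N (by omega)
      (fun i => if i.1 = 0 then s else m) (fun i => if i.1 = 0 then 0 else s)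
      (fun i => by split_ifs <;> omega)
      (fun i => by split_ifs <;> omega)
      (fun i hi => by split_ifs <;> omega)
      (fun i j hij => by have := i.2; have := j.2; split_ifs <;> omega)
      (fun i hi => by have := i.2; split_ifs <;> omega)
      x (Fin.cons v1 (Fin.cons v2 finZeroElim))
      (by intro i
          fin_cases i
          · exact h1
          · exact h2)
    refine ⟨y, ⟨hy0, fun _ => hyr 0, fun _ => hyr 1, fun h => by omega⟩, ?_⟩
    rintro y' ⟨hy0', hr1, hr2, _⟩
    refine hyu y' ⟨hy0', ?_⟩
    intro i
    fin_cases i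
    · exact hr1 hs
    · exact hr2 hm
  -- case s > 0, m > 0, t > 0 : three pieces
  · obtain ⟨y, ⟨hy0, hyr⟩, hyu⟩ := Ekgen hf 3 N (by omega)
      (fun i => if i.1 = 0 then s else if i.1 = 1 then m else t)
      (fun i => if i.1 = 0 then 0 else if i.1 = 1 then s else s + m)
      (fun i => by split_ifs <;> omega)
      (fun i => by split_ifs <;> omega)
      (fun i hi => by split_ifs <;> omega)
      (fun i j hij => by have := i.2; have := j.2; split_ifs <;> omega)
      (fun i hi => by have := i.2; split_ifs <;> omega)
      x (Fin.cons v1 (Fin.cons v2 (Fin.cons v3 finZeroElim)))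
      (by intro i
          fin_cases i
          · exact h1
          · exact h2
          · exact h3)
    refine ⟨y, ⟨hy0, fun _ => hyr 0, fun _ => hyr 1, fun _ => hyr 2⟩, ?_⟩
    rintro y' ⟨hy0', hr1, hr2, hr3⟩
    refine hyu y' ⟨hy0', ?_⟩
    intro i
    fin_cases i
    · exact hr1 hs
    · exact hr2 hm
    · exact hr3 ht

def Imap (s A t B N M : ℕ) (hC : s + A + t = N) (hD : s + B + t = M)
    (f : Obj A ⟶ Obj B) : Obj N ⟶ Obj M :=
  SimplexCategory.mkHom
    ⟨fun j => ⟨if j.1 ≤ s then j.1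
        else if j.1 ≤ s + A then s + (f.toOrderHom ⟨min (j.1 - s) A,
          Nat.lt_succ_of_le (Nat.min_le_right _ _)⟩).1
        else j.1 + B - A, by
      have hj : j.1 < N + 1 := j.2
      split_ifs with hc1 hc2
      · omega
      · exact lt_of_le_of_lt (Nat.add_le_add_left (Nat.lt_succ_iff.mp (Fin.is_lt _)) s)
          (by have hB : (Obj B).len = B := rfl; omega)
      · omega⟩,
     fun p q hpq => by
      simp only [Fin.mk_le_mk]
      have hp : p.1 < N + 1 := p.2
      have hq : q.1 < N + 1 := q.2
      have hpq' : p.1 ≤ q.1 := hpq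
      split_ifs <;>
        first
          | omega
          | exact le_trans (by omega) (Nat.le_add_right s _)
          | exact Nat.add_le_add_left
              (f.toOrderHom.monotone (by simp only [Fin.mk_le_mk]; omega)) s
          | exact le_trans
              (Nat.add_le_add_left (Nat.lt_succ_iff.mp (Fin.is_lt _)) s)
              (by have hB : (Obj B).len = B := rfl; omega)⟩

lemma Imap_val (s A t B N M : ℕ) (hC : s + A + t = N) (hD : s + B + t = M)
    (f : Obj A ⟶ Obj B) (j : Fin (N + 1)) :
    ((Imap s A t B N M hC hD f).toOrderHom j : ℕ) =
      if j.1 ≤ s then j.1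
      else if j.1 ≤ s + A then s + (f.toOrderHom ⟨min (j.1 - s) A,
        Nat.lt_succ_of_le (Nat.min_le_right _ _)⟩).1
      else j.1 + B - A := rfl

set_option maxHeartbeats 4000000 in
/-- If `f : Y → X` is semi-ikeo and `X` is a decomposition space, then `Y` is a
decomposition space. -/
theorem decomposition_space_of_semiIkeo {Y X : SSet} (f : Y ⟶ X)
    (hf : SemiIkeo f) (hX : DecompositionSpace X) : DecompositionSpace Y := by
  intro a b c d u g h i hu hg hpo
  have hgv := inert_val_s6 hg
  set s : ℕ := ((g.toOrderHom 0 : Fin (c.len + 1)) : ℕ) with hsdef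
  have hsA : s + a.len ≤ c.len := by
    have h1 := hgv (Fin.last a.len)
    have h2 := (g.toOrderHom (Fin.last a.len)).2
    have h3 : ((Fin.last a.len : Fin (a.len + 1)) : ℕ) = a.len := rfl
    omega
  have hu0 : (u.toOrderHom 0 : ℕ) = 0 := by
    have := congrArg Fin.val hu.1
    simpa using this
  have huA : (u.toOrderHom (Fin.last a.len) : ℕ) = b.len := by
    have := congrArg Fin.val hu.2
    simpa using this
  have hw : ∀ z : Fin (a.len + 1),
      (h.toOrderHom (u.toOrderHom z) : ℕ) = (i.toOrderHom (g.toOrderHom z) : ℕ) := by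
    intro z
    exact congrArg (fun φ => ((SimplexCategory.Hom.toOrderHom φ) z : ℕ)) hpo.w
  by_cases hiso : s = 0 ∧ s + a.len = c.len
  · -- `g` is an isomorphism: the square is a pullback because two parallel sides are bijections
    obtain ⟨hs0, hAC⟩ := hiso
    have hgval : ∀ j : Fin (a.len + 1), (g.toOrderHom j : ℕ) = j.1 := fun j => by
      rw [hgv j]; omega
    set ginv : c ⟶ a := SimplexCategory.mkHom
      ⟨fun j : Fin (c.len + 1) =>
        (⟨j.1, by have := j.2; omega⟩ : Fin (a.len + 1)), fun p q hpq => by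
        simp only [Fin.mk_le_mk]; exact hpq⟩ with hginvdef
    have hggi : g ≫ ginv = 𝟙 a := homext fun j => hgval j
    have hgig : ginv ≫ g = 𝟙 c := homext fun j => hgval (ginv.toOrderHom j)
    set r : d ⟶ b := hpo.desc (𝟙 b) (ginv ≫ u) (by
      rw [Category.comp_id, ← Category.assoc, hggi, Category.id_comp]) with hrdef
    have hhr : h ≫ r = 𝟙 b := hpo.inl_desc _ _ _
    have hir : i ≫ r = ginv ≫ u := hpo.inr_desc _ _ _
    have hrh : r ≫ h = 𝟙 d := by
      apply hpo.hom_ext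
      · rw [← Category.assoc, hhr, Category.id_comp, Category.comp_id]
      · rw [← Category.assoc, hir, Category.assoc, hpo.w, ← Category.assoc, hgig,
          Category.id_comp, Category.comp_id]
    refine pbsq_of_bij ?_ (Y.map r.op) ?_ ?_ ?_
    · intro yd
      rw [← smap_comp, ← smap_comp, hpo.w]
    · intro yd
      rw [← smap_comp]
      exact smap_id Y _ hrh yd
    · intro yb
      rw [← smap_comp]
      exact smap_id Y _ hhr yb
    · intro x1 x2 hxy
      have h12 := congrArg (Y.map ginv.op) hxy
      rw [← smap_comp, ← smap_comp, smap_id Y _ hgig x1, smap_id Y _ hgig x2] at h12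
      exact h12
  · -- main case
    set t : ℕ := c.len - s - a.len with htdef
    have hC : s + a.len + t = c.len := by omega
    have hst : 1 ≤ s + t := by omega
    set D : ℕ := s + b.len + t with hDdef
    have pf1c : 0 + s ≤ c.len := by omega
    have pf2c : s + a.len ≤ c.len := by omega
    have pf3c : s + a.len + t ≤ c.len := by omega
    have pf1d : 0 + s ≤ D := by omega
    have pf2d : s + b.len ≤ D := by omega
    have pf3d : s + b.len + t ≤ D := by omega
    set Hc : Obj b.len ⟶ Obj D := iota b.len s pf2d with hHcdef
    set Ic : Obj c.len ⟶ Obj D := Imap s a.len t b.len c.len D hC hDdef.symm u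
      with hIcdef
    have hIv : ∀ j : Fin (c.len + 1), (Ic.toOrderHom j : ℕ) =
        if j.1 ≤ s then j.1
        else if j.1 ≤ s + a.len then
          s + (u.toOrderHom ⟨min (j.1 - s) a.len,
            Nat.lt_succ_of_le (Nat.min_le_right _ _)⟩).1
        else j.1 + b.len - a.len := fun j =>
      Imap_val s a.len t b.len c.len D hC hDdef.symm u j
    have Eq1 : u ≫ Hc = g ≫ Ic := by
      apply homext
      intro j
      have hj : j.1 < a.len + 1 := j.2
      have hgj := hgv j
      show s + (u.toOrderHom j : ℕ) = (Ic.toOrderHom (g.toOrderHom j) : ℕ)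
      rw [hIv]
      rcases Nat.eq_zero_or_pos j.1 with hj0 | hj0
      · rw [if_pos (show (g.toOrderHom j : ℕ) ≤ s by omega)]
        rw [oh_congr u (show (j : ℕ) = ((0 : Fin (a.len + 1)) : ℕ) from by
          have : ((0 : Fin (a.len + 1)) : ℕ) = 0 := rfl
          omega), hu0]
        omega
      · rw [if_neg (show ¬ (g.toOrderHom j : ℕ) ≤ s by omega),
          if_pos (show (g.toOrderHom j : ℕ) ≤ s + a.len by omega)]
        refine congrArg (fun z => s + z) (oh_congr u ?_)
        show (j : ℕ) = min ((g.toOrderHom j : ℕ) - s) a.len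
        omega
    have Eq2 : iota s 0 pf1c ≫ Ic = iota s 0 pf1d := by
      apply homext
      intro j
      have hj : j.1 < s + 1 := j.2
      show (Ic.toOrderHom ((iota s 0 pf1c).toOrderHom j) : ℕ) = 0 + j.1
      rw [hIv]
      have harg : ((iota s 0 pf1c).toOrderHom j : ℕ) = 0 + j.1 := rfl
      rw [if_pos (show ((iota s 0 pf1c).toOrderHom j : ℕ) ≤ s by omega)]
      exact harg
    have Eq3 : iota t (s + a.len) pf3c ≫ Ic = iota t (s + b.len) pf3d := by
      apply homext
      intro j
      have hj : j.1 < t + 1 := j.2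
      show (Ic.toOrderHom ((iota t (s + a.len) pf3c).toOrderHom j) : ℕ)
        = (s + b.len) + j.1
      rw [hIv]
      have harg : ((iota t (s + a.len) pf3c).toOrderHom j : ℕ) = (s + a.len) + j.1 := rfl
      rcases Nat.eq_zero_or_pos j.1 with hj0 | hj0
      · rcases Nat.eq_zero_or_pos a.len with hA | hA
        · have hB : b.len = 0 := by
            have h1 := oh_congr u (show ((Fin.last a.len : Fin (a.len + 1)) : ℕ)
                = ((0 : Fin (a.len + 1)) : ℕ) from by
              have e1 : ((Fin.last a.len : Fin (a.len + 1)) : ℕ) = a.len := rfl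
              have e2 : ((0 : Fin (a.len + 1)) : ℕ) = 0 := rfl
              omega)
            omega
          rw [if_pos (show ((iota t (s + a.len) pf3c).toOrderHom j : ℕ) ≤ s by omega)]
          omega
        · rw [if_neg (show ¬ ((iota t (s + a.len) pf3c).toOrderHom j : ℕ) ≤ s by omega),
            if_pos (show ((iota t (s + a.len) pf3c).toOrderHom j : ℕ) ≤ s + a.len by omega)]
          rw [oh_congr u (show min (((iota t (s + a.len) pf3c).toOrderHom j : ℕ) - s) a.len
              = ((Fin.last a.len : Fin (a.len + 1)) : ℕ) from by
            have e1 : ((Fin.last a.len : Fin (a.len + 1)) : ℕ) = a.len := rfl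
            omega), huA]
          omega
      · rw [if_neg (show ¬ ((iota t (s + a.len) pf3c).toOrderHom j : ℕ) ≤ s by omega),
          if_neg (show ¬ ((iota t (s + a.len) pf3c).toOrderHom j : ℕ) ≤ s + a.len by omega)]
        omega
    -- seam identities coming from the pushout square
    have seam1 : ∀ (w1 : 0 < b.len + 1) (w2 : s < c.len + 1),
        (h.toOrderHom ⟨0, w1⟩ : ℕ) = (i.toOrderHom ⟨s, w2⟩ : ℕ) := by
      intro w1 w2
      calc (h.toOrderHom ⟨0, w1⟩ : ℕ)
          = (h.toOrderHom (u.toOrderHom 0) : ℕ) := oh_congr h (by rw [hu0])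
        _ = (i.toOrderHom (g.toOrderHom 0) : ℕ) := hw 0
        _ = (i.toOrderHom ⟨s, w2⟩ : ℕ) := oh_congr i (by
            show ((g.toOrderHom 0 : Fin (c.len + 1)) : ℕ) = s
            omega)
    have seam2 : ∀ (w1 : b.len < b.len + 1) (w2 : s + a.len < c.len + 1),
        (h.toOrderHom ⟨b.len, w1⟩ : ℕ) = (i.toOrderHom ⟨s + a.len, w2⟩ : ℕ) := by
      intro w1 w2
      calc (h.toOrderHom ⟨b.len, w1⟩ : ℕ)
          = (h.toOrderHom (u.toOrderHom (Fin.last a.len)) : ℕ) := oh_congr h (by rw [huA])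
        _ = (i.toOrderHom (g.toOrderHom (Fin.last a.len)) : ℕ) := hw (Fin.last a.len)
        _ = (i.toOrderHom ⟨s + a.len, w2⟩ : ℕ) := oh_congr i (by
            have e1 := hgv (Fin.last a.len)
            have e2 : ((Fin.last a.len : Fin (a.len + 1)) : ℕ) = a.len := rfl
            show ((g.toOrderHom (Fin.last a.len) : Fin (c.len + 1)) : ℕ) = s + a.len
            omega)
    -- the inverse comparison map
    set Pc : Obj D ⟶ d := SimplexCategory.mkHom
      ⟨fun j : Fin (D + 1) =>
        if j.1 < s then i.toOrderHom ⟨min j.1 c.len, Nat.lt_succ_of_le (Nat.min_le_right _ _)⟩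
        else if j.1 ≤ s + b.len then
          h.toOrderHom ⟨min (j.1 - s) b.len, Nat.lt_succ_of_le (Nat.min_le_right _ _)⟩
        else i.toOrderHom ⟨min (j.1 + a.len - b.len) c.len,
          Nat.lt_succ_of_le (Nat.min_le_right _ _)⟩,
       fun p q hpq => by
        have hp : p.1 < D + 1 := p.2
        have hq : q.1 < D + 1 := q.2
        have hpq' : p.1 ≤ q.1 := hpq
        have w1 : b.len < b.len + 1 := Nat.lt_succ_self _
        have w0 : 0 < b.len + 1 := Nat.succ_pos _
        have w2 : s + a.len < c.len + 1 := by omega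
        have w2' : s < c.len + 1 := by omega
        dsimp only
        split_ifs with h1 h2 h3 h4 h5
        · exact ohmono i (show min p.1 c.len ≤ min q.1 c.len by omega)
        · refine le_trans (ohmono i (q := ⟨s, w2'⟩)
            (show min p.1 c.len ≤ s by omega)) ?_
          rw [Fin.le_def, ← seam1 w0 w2']
          exact ohmono h (show (0 : ℕ) ≤ min (q.1 - s) b.len from Nat.zero_le _)
        · exact ohmono i
            (show min p.1 c.len ≤ min (q.1 + a.len - b.len) c.len by omega)
        · exact absurd hpq' (by omega)
        · exact ohmono h (show min (p.1 - s) b.len ≤ min (q.1 - s) b.len by omega)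
        · refine le_trans (ohmono h (q := ⟨b.len, w1⟩)
            (show min (p.1 - s) b.len ≤ b.len by omega)) ?_
          rw [Fin.le_def, seam2 w1 w2]
          exact ohmono i
            (show s + a.len ≤ min (q.1 + a.len - b.len) c.len by omega)
        · exact absurd hpq' (by omega)
        · exact absurd hpq' (by omega)
        · exact ohmono i (show min (p.1 + a.len - b.len) c.len
            ≤ min (q.1 + a.len - b.len) c.len by omega)⟩ with hPcdef
    have hPcv : ∀ z : Fin (D + 1), Pc.toOrderHom z =
        if z.1 < s then i.toOrderHom ⟨min z.1 c.len, Nat.lt_succ_of_le (Nat.min_le_right _ _)⟩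
        else if z.1 ≤ s + b.len then
          h.toOrderHom ⟨min (z.1 - s) b.len, Nat.lt_succ_of_le (Nat.min_le_right _ _)⟩
        else i.toOrderHom ⟨min (z.1 + a.len - b.len) c.len,
          Nat.lt_succ_of_le (Nat.min_le_right _ _)⟩ := fun z => rfl
    -- the comparison maps between d and Obj D
    set φd : d ⟶ Obj D := hpo.desc Hc Ic Eq1 with hφdef
    have hhφ : h ≫ φd = Hc := hpo.inl_desc _ _ _
    have hiφ : i ≫ φd = Ic := hpo.inr_desc _ _ _
    have hhφv : ∀ z, (φd.toOrderHom (h.toOrderHom z) : ℕ) = (Hc.toOrderHom z : ℕ) :=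
      fun z => congrArg (fun ψ => ((SimplexCategory.Hom.toOrderHom ψ) z : ℕ)) hhφ
    have hiφv : ∀ z, (φd.toOrderHom (i.toOrderHom z) : ℕ) = (Ic.toOrderHom z : ℕ) :=
      fun z => congrArg (fun ψ => ((SimplexCategory.Hom.toOrderHom ψ) z : ℕ)) hiφ
    have hPcφ : Pc ≫ φd = 𝟙 (Obj D) := by
      apply homext
      intro j
      have hj : j.1 < D + 1 := j.2
      show (φd.toOrderHom (Pc.toOrderHom j) : ℕ) = j.1
      rw [hPcv j]
      by_cases h1 : j.1 < s
      · rw [if_pos h1, hiφv, hIv]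
        rw [if_pos (show min j.1 c.len ≤ s by omega)]
        show min j.1 c.len = j.1
        omega
      · rw [if_neg h1]
        by_cases h2 : j.1 ≤ s + b.len
        · rw [if_pos h2, hhφv]
          show s + min (j.1 - s) b.len = j.1
          omega
        · rw [if_neg h2, hiφv, hIv]
          rw [if_neg (show ¬ min (j.1 + a.len - b.len) c.len ≤ s by omega),
            if_neg (show ¬ min (j.1 + a.len - b.len) c.len ≤ s + a.len by omega)]
          show min (j.1 + a.len - b.len) c.len + b.len - a.len = j.1
          omega
    have hφPc : φd ≫ Pc = 𝟙 d := by
      apply hpo.hom_ext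
      · rw [← Category.assoc, hhφ, Category.comp_id]
        apply homext
        intro j
        have hj : j.1 < b.len + 1 := j.2
        show (Pc.toOrderHom (Hc.toOrderHom j) : ℕ) = (h.toOrderHom j : ℕ)
        rw [hPcv]
        have harg : ((Hc.toOrderHom j : Fin (D + 1)) : ℕ) = s + j.1 := rfl
        rw [if_neg (show ¬ (Hc.toOrderHom j : ℕ) < s by omega),
          if_pos (show (Hc.toOrderHom j : ℕ) ≤ s + b.len by omega)]
        exact oh_congr h (by show min ((Hc.toOrderHom j : ℕ) - s) b.len = j.1; omega)
      · rw [← Category.assoc, hiφ, Category.comp_id]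
        apply homext
        intro j
        have hj : j.1 < c.len + 1 := j.2
        show (Pc.toOrderHom (Ic.toOrderHom j) : ℕ) = (i.toOrderHom j : ℕ)
        rw [hPcv]
        have hIj := hIv j
        by_cases h1 : j.1 ≤ s
        · rw [if_pos h1] at hIj
          by_cases h1' : j.1 < s
          · rw [if_pos (show (Ic.toOrderHom j : ℕ) < s by omega)]
            exact oh_congr i (by show min ((Ic.toOrderHom j : ℕ)) c.len = j.1; omega)
          · have hjs : j.1 = s := by omega
            rw [if_neg (show ¬ (Ic.toOrderHom j : ℕ) < s by omega),
              if_pos (show (Ic.toOrderHom j : ℕ) ≤ s + b.len by omega)]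
            have w0 : 0 < b.len + 1 := Nat.succ_pos _
            have w2' : s < c.len + 1 := by omega
            refine Eq.trans (oh_congr h (q := ⟨0, w0⟩)
              (by show min ((Ic.toOrderHom j : ℕ) - s) b.len = 0; omega)) ?_
            refine Eq.trans (seam1 w0 w2') (oh_congr i ?_)
            show s = j.1
            omega
        · by_cases h2 : j.1 ≤ s + a.len
          · rw [if_neg h1, if_pos h2] at hIj
            obtain ⟨z, hz1, hz2⟩ : ∃ z : Fin (a.len + 1),
                (Ic.toOrderHom j : ℕ) = s + (u.toOrderHom z : ℕ) ∧
                  (z : ℕ) = min (j.1 - s) a.len := ⟨_, hIj, rfl⟩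
            have hub := (u.toOrderHom z).2
            rw [if_neg (show ¬ (Ic.toOrderHom j : ℕ) < s by omega),
              if_pos (show (Ic.toOrderHom j : ℕ) ≤ s + b.len by omega)]
            refine Eq.trans (oh_congr h (q := u.toOrderHom z)
              (by show min ((Ic.toOrderHom j : ℕ) - s) b.len = (u.toOrderHom z : ℕ); omega)) ?_
            refine Eq.trans (hw z) (oh_congr i ?_)
            show (g.toOrderHom z : ℕ) = j.1
            have := hgv z
            omega
          · rw [if_neg h1, if_neg h2] at hIj
            rw [if_neg (show ¬ (Ic.toOrderHom j : ℕ) < s by omega),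
              if_neg (show ¬ (Ic.toOrderHom j : ℕ) ≤ s + b.len by omega)]
            exact oh_congr i (by
              show min ((Ic.toOrderHom j : ℕ) + a.len - b.len) c.len = j.1
              omega)
    -- bijections on simplices induced by the comparison maps
    have hYe : ∀ x1 : Y.obj (op d), Y.map φd.op (Y.map Pc.op x1) = x1 := fun x1 => by
      rw [← smap_comp]
      exact smap_id Y _ hφPc x1
    have hYe' : ∀ σ : Smp Y D, Y.map Pc.op (Y.map φd.op σ) = σ := fun σ => by
      rw [← smap_comp]
      exact smap_id Y _ hPcφ σ
    have hXe : ∀ x1 : X.obj (op d), X.map φd.op (X.map Pc.op x1) = x1 := fun x1 => by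
      rw [← smap_comp]
      exact smap_id X _ hφPc x1
    have hXe' : ∀ σ : Smp X D, X.map Pc.op (X.map φd.op σ) = σ := fun σ => by
      rw [← smap_comp]
      exact smap_id X _ hPcφ σ
    have hfunY1 : (fun σ : Smp Y D => Y.map h.op (Y.map φd.op σ)) = Y.map Hc.op := by
      funext σ
      rw [← smap_comp, hhφ]
    have hfunY2 : (fun σ : Smp Y D => Y.map i.op (Y.map φd.op σ)) = Y.map Ic.op := by
      funext σ
      rw [← smap_comp, hiφ]
    have hfunX1 : (fun σ : Smp X D => X.map h.op (X.map φd.op σ)) = X.map Hc.op := by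
      funext σ
      rw [← smap_comp, hhφ]
    have hfunX2 : (fun σ : Smp X D => X.map i.op (X.map φd.op σ)) = X.map Ic.op := by
      funext σ
      rw [← smap_comp, hiφ]
    -- the canonical pullback square for X
    have PBX : IsPullbackSq (X.map Hc.op) (X.map Ic.op) (X.map u.op) (X.map g.op) := by
      have base := hX u g h i hu hg hpo
      have := pbsq_equiv' (X.map φd.op) (X.map Pc.op) hXe hXe' base
      rwa [hfunX1, hfunX2] at this
    refine pbsq_equiv (Y.map φd.op) (Y.map Pc.op) hYe hYe' ?_
    rw [hfunY1, hfunY2]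
    constructor
    · intro σ
      rw [← smap_comp, ← smap_comp, Eq1]
    · intro yb yc hbc
      have hxbc : X.map u.op (f.app (op (Obj b.len)) yb)
          = X.map g.op (f.app (op (Obj c.len)) yc) :=
        (snat f u yb).symm.trans ((congrArg (f.app (op a)) hbc).trans (snat f g yc))
      obtain ⟨xd, ⟨hxd1, hxd2⟩, hxdu⟩ :=
        PBX.2 (f.app (op (Obj b.len)) yb) (f.app (op (Obj c.len)) yc) hxbc
      set v1 : Smp Y s := Y.map (iota s 0 pf1c).op yc with hv1def
      set v3 : Smp Y t := Y.map (iota t (s + a.len) pf3c).op yc with hv3def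
      have hT1 : f.app (op (Obj s)) v1 = X.map (iota s 0 pf1d).op xd := by
        rw [hv1def, snat, ← hxd2, ← smap_comp, Eq2]
      have hT2 : f.app (op (Obj b.len)) yb = X.map (iota b.len s pf2d).op xd := by
        rw [← hxd1, hHcdef]
      have hT3 : f.app (op (Obj t)) v3 = X.map (iota t (s + b.len) pf3d).op xd := by
        rw [hv3def, snat, ← hxd2, ← smap_comp, Eq3]
      obtain ⟨yd, ⟨hyd0, hyds, hydm, hydt⟩, hydu⟩ :=
        T3 hf s b.len t D hDdef.symm (by omega) pf1d pf2d pf3d xd v1 yb v3 hT1 hT2 hT3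
      -- yd restricts to yb along Hc
      have hA : Y.map Hc.op yd = yb := by
        rcases Nat.eq_zero_or_pos b.len with hb0 | hb0
        · have hsub : ∀ z w : Fin (b.len + 1), (z : ℕ) = (w : ℕ) := by
            intro z w
            have := z.2
            have := w.2
            omega
          rcases Nat.eq_zero_or_pos s with hs0 | hs0
          · -- s = 0, b.len = 0, t ≥ 1
            have ht1 : 1 ≤ t := by omega
            have pk : 0 + b.len ≤ t := by omega
            have pe2 : (s + a.len) + b.len ≤ c.len := by omega
            have e1 : iota b.len 0 pk ≫ iota t (s + b.len) pf3d = Hc := by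
              rw [iota_comp, hHcdef]
              exact iota_congr _ _ (by omega)
            have e2 : iota b.len 0 pk ≫ iota t (s + a.len) pf3c
                = iota b.len (s + a.len) pe2 := by
              rw [iota_comp]
              exact iota_congr _ _ (by omega)
            have pa : a.len + b.len ≤ a.len := by omega
            have e3 : iota b.len a.len pa ≫ u = 𝟙 b := homext fun j => hsub _ _
            have e4 : iota b.len a.len pa ≫ g = iota b.len (s + a.len) pe2 := by
              apply homext
              intro j
              show (g.toOrderHom ((iota b.len a.len pa).toOrderHom j) : ℕ)
                = (s + a.len) + j.1
              rw [hgv]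
              show s + (a.len + j.1) = (s + a.len) + j.1
              omega
            calc Y.map Hc.op yd
                = Y.map (iota b.len 0 pk ≫ iota t (s + b.len) pf3d).op yd := by rw [e1]
              _ = Y.map (iota b.len 0 pk).op (Y.map (iota t (s + b.len) pf3d).op yd) :=
                  smap_comp Y _ _ yd
              _ = Y.map (iota b.len 0 pk).op v3 := by rw [hydt ht1]
              _ = Y.map (iota b.len 0 pk).op (Y.map (iota t (s + a.len) pf3c).op yc) := by
                  rw [hv3def]
              _ = Y.map (iota b.len (s + a.len) pe2).op yc := by rw [← smap_comp, e2]
              _ = Y.map (iota b.len a.len pa ≫ g).op yc := by rw [e4]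
              _ = Y.map (iota b.len a.len pa).op (Y.map g.op yc) := smap_comp Y _ _ yc
              _ = Y.map (iota b.len a.len pa).op (Y.map u.op yb) := by rw [hbc]
              _ = Y.map (iota b.len a.len pa ≫ u).op yb := (smap_comp Y _ _ yb).symm
              _ = yb := smap_id Y _ e3 yb
          · -- s ≥ 1, b.len = 0
            have pk : s + b.len ≤ s := by omega
            have pe2 : s + b.len ≤ c.len := by omega
            have e1 : iota b.len s pk ≫ iota s 0 pf1d = Hc := by
              rw [iota_comp, hHcdef]
              exact iota_congr _ _ (by omega)
            have e2 : iota b.len s pk ≫ iota s 0 pf1c = iota b.len s pe2 := by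
              rw [iota_comp]
              exact iota_congr _ _ (by omega)
            have pa : 0 + b.len ≤ a.len := by omega
            have e3 : iota b.len 0 pa ≫ u = 𝟙 b := homext fun j => hsub _ _
            have e4 : iota b.len 0 pa ≫ g = iota b.len s pe2 := by
              apply homext
              intro j
              show (g.toOrderHom ((iota b.len 0 pa).toOrderHom j) : ℕ) = s + j.1
              rw [hgv]
              show s + (0 + j.1) = s + j.1
              omega
            calc Y.map Hc.op yd
                = Y.map (iota b.len s pk ≫ iota s 0 pf1d).op yd := by rw [e1]
              _ = Y.map (iota b.len s pk).op (Y.map (iota s 0 pf1d).op yd) :=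
                  smap_comp Y _ _ yd
              _ = Y.map (iota b.len s pk).op v1 := by rw [hyds hs0]
              _ = Y.map (iota b.len s pk).op (Y.map (iota s 0 pf1c).op yc) := by
                  rw [hv1def]
              _ = Y.map (iota b.len s pe2).op yc := by rw [← smap_comp, e2]
              _ = Y.map (iota b.len 0 pa ≫ g).op yc := by rw [e4]
              _ = Y.map (iota b.len 0 pa).op (Y.map g.op yc) := smap_comp Y _ _ yc
              _ = Y.map (iota b.len 0 pa).op (Y.map u.op yb) := by rw [hbc]
              _ = Y.map (iota b.len 0 pa ≫ u).op yb := (smap_comp Y _ _ yb).symm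
              _ = yb := smap_id Y _ e3 yb
        · exact hydm hb0
      -- yd restricts to yc along Ic
      have hgeq : g = iota a.len s pf2c := homext fun j => hgv j
      have hB : Y.map Ic.op yd = yc := by
        have hC1' : f.app (op (Obj s)) v1
            = X.map (iota s 0 pf1c).op (f.app (op (Obj c.len)) yc) := by
          rw [hv1def]
          exact snat f _ yc
        have hC2' : f.app (op (Obj a.len)) (Y.map g.op yc)
            = X.map (iota a.len s pf2c).op (f.app (op (Obj c.len)) yc) := by
          rw [← hgeq]
          exact snat f g yc
        have hC3' : f.app (op (Obj t)) v3
            = X.map (iota t (s + a.len) pf3c).op (f.app (op (Obj c.len)) yc) := by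
          rw [hv3def]
          exact snat f _ yc
        obtain ⟨w, hwP, hwu⟩ := T3 hf s a.len t c.len hC (by omega) pf1c pf2c pf3c
          (f.app (op (Obj c.len)) yc) v1 (Y.map g.op yc) v3 hC1' hC2' hC3'
        have P1 : f.app (op (Obj c.len)) yc = f.app (op (Obj c.len)) yc ∧
            (1 ≤ s → Y.map (iota s 0 pf1c).op yc = v1) ∧
            (1 ≤ a.len → Y.map (iota a.len s pf2c).op yc = Y.map g.op yc) ∧
            (1 ≤ t → Y.map (iota t (s + a.len) pf3c).op yc = v3) := by
          refine ⟨rfl, fun _ => rfl, fun _ => ?_, fun _ => rfl⟩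
          rw [← hgeq]
        have P2 : f.app (op (Obj c.len)) (Y.map Ic.op yd) = f.app (op (Obj c.len)) yc ∧
            (1 ≤ s → Y.map (iota s 0 pf1c).op (Y.map Ic.op yd) = v1) ∧
            (1 ≤ a.len → Y.map (iota a.len s pf2c).op (Y.map Ic.op yd)
              = Y.map g.op yc) ∧
            (1 ≤ t → Y.map (iota t (s + a.len) pf3c).op (Y.map Ic.op yd) = v3) := by
          refine ⟨?_, fun hs1 => ?_, fun hA1 => ?_, fun ht1 => ?_⟩
          · rw [snat, hyd0, hxd2]
          · rw [← smap_comp, Eq2]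
            exact hyds hs1
          · have e5 : iota a.len s pf2c ≫ Ic = u ≫ Hc := by
              rw [← hgeq]
              exact Eq1.symm
            rw [← smap_comp, e5, smap_comp, hA, hbc]
          · rw [← smap_comp, Eq3]
            exact hydt ht1
        exact (hwu _ P2).trans (hwu _ P1).symm
      refine ⟨yd, ⟨hA, hB⟩, ?_⟩
      rintro y' ⟨hy'1, hy'2⟩
      apply hydu
      refine ⟨?_, fun hs1 => ?_, fun hb1 => ?_, fun ht1 => ?_⟩
      · apply hxdu
        constructor
        · rw [← snat f Hc y', hy'1]
        · rw [← snat f Ic y', hy'2]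
      · rw [hv1def, ← hy'2, ← smap_comp, Eq2]
      · exact hy'1
      · rw [hv3def, ← hy'2, ← smap_comp, Eq3]


end Crapo
end
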